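/- arXiv:1409.3013 — 2 statements merged into one kernel-verified Lean document; each statement's English description precedes it below -/
import Mathlib

section
/- The supremum over C¹ perturbations equals the supremum over bounded measurable perturbations in the random-walk rate function: sup over a ∈ C¹([0,T]) of F(a) = sup over bounded Borel measurable a: [0,T] → ℝ of F(a), where F(a) := ∫₀ᵀ ( a(t)x'(t) − w⁺(t)(e^{a(t)} − 1) − w⁻(t)(e^{−a(t)} − 1) ) dt. -/
/-!
A `C¹` function is bounded on `[0, T]`, and replacing it by its indicator on `[0, T]` does not
change `F`; this gives `≤`. Conversely, mollifying a bounded measurable `a` with normalized bumps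
of shrinking radius gives smooth functions with the same bound that converge to `a` almost
everywhere (Lebesgue differentiation). Since for `|s| ≤ B` the integrand is dominated by
`B |x'| + 2M (e^B + 1)`, dominated convergence makes `F` of the mollified functions converge
to `F(a)`.
-/

open MeasureTheory

noncomputable section

/-- `F(a) = ∫₀ᵀ ( a(t)x'(t) − w⁺(t)(e^{a(t)} − 1) − w⁻(t)(e^{−a(t)} − 1) ) dt`. -/
def Frate (T : ℝ) (x' wp wm : ℝ → ℝ) (a : ℝ → ℝ) : ℝ :=
  ∫ t in Set.Ioc 0 T,
    (a t * x' t - wp t * (Real.exp (a t) - 1) - wm t * (Real.exp (-a t) - 1))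

open Filter Topology ContinuousLinearMap
open scoped ContDiff Convolution

theorem exists_seq_contDiff_tendsto_ae_of_norm_le {G E : Type*} [NormedAddCommGroup G]
    [NormedSpace ℝ G] [FiniteDimensional ℝ G] [MeasurableSpace G] [BorelSpace G]
    [NormedAddCommGroup E] [NormedSpace ℝ E] [CompleteSpace E]
    {μ : Measure G} [μ.IsAddHaarMeasure] {a : G → E} (ha : AEStronglyMeasurable a μ) {K : ℝ}
    (hK : ∀ x, ‖a x‖ ≤ K) :
    ∃ g : ℕ → G → E, (∀ n, ContDiff ℝ ∞ (g n)) ∧ (∀ n x, ‖g n x‖ ≤ K) ∧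
      ∀ᵐ x ∂μ, Tendsto (fun n => g n x) atTop (𝓝 (a x)) := by
  let φ : ℕ → ContDiffBump (0 : G) := fun n =>
    ⟨1 / (n + 1), 2 * (1 / (n + 1)), by positivity, lt_two_mul_self (by positivity)⟩
  have hloc : LocallyIntegrable a μ :=
    (locallyIntegrable_const K).mono ha (ae_of_all _ fun x => (hK x).trans (le_abs_self K))
  refine ⟨fun n => (φ n).normed μ ⋆[lsmul ℝ ℝ, μ] a, fun n => ?_, fun n x => ?_, ?_⟩
  · exact (φ n).hasCompactSupport_normed.contDiff_convolution_left _ (φ n).contDiff_normed hloc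
  · simpa using dist_convolution_le (z₀ := 0) ((norm_nonneg _).trans (hK 0))
      (φ n).support_normed_eq.subset (φ n).nonneg_normed (φ n).integral_normed ha
      (fun y _ => by simpa using hK y)
  · refine ContDiffBump.ae_convolution_tendsto_right_of_locallyIntegrable (K := 2) ?_
      (Eventually.of_forall fun n => le_rfl) hloc
    simpa [φ] using tendsto_one_div_add_atTop_nhds_zero_nat.const_mul (2 : ℝ)

/-- `Frate T x' wp wm a` unfolds to `∫ t in Set.Ioc 0 T, rateIntegrand x' wp wm (a t) t`. -/
def rateIntegrand {α : Type*} (x' wp wm : α → ℝ) (s : ℝ) (t : α) : ℝ :=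
  s * x' t - wp t * (Real.exp s - 1) - wm t * (Real.exp (-s) - 1)

section

variable {α : Type*} {x' wp wm : α → ℝ}

theorem continuous_rateIntegrand (t : α) : Continuous fun s => rateIntegrand x' wp wm s t := by
  unfold rateIntegrand; fun_prop

theorem abs_rateIntegrand_le {M B s : ℝ} {t : α} (hs : |s| ≤ B) (hwp : |wp t| ≤ M)
    (hwm : |wm t| ≤ M) :
    |rateIntegrand x' wp wm s t| ≤ B * |x' t| + 2 * M * (Real.exp B + 1) := by
  have hexp : ∀ r, |r| ≤ B → |Real.exp r - 1| ≤ Real.exp B + 1 := fun r hr =>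
    calc |Real.exp r - 1| ≤ |Real.exp r| + |1| := abs_sub _ _
      _ ≤ Real.exp B + 1 := by
        rw [abs_of_pos (Real.exp_pos r), abs_one]
        gcongr
        exact (le_abs_self r).trans hr
  calc |rateIntegrand x' wp wm s t|
      ≤ |s| * |x' t| + |wp t| * |Real.exp s - 1| + |wm t| * |Real.exp (-s) - 1| := by
        unfold rateIntegrand
        rw [← abs_mul, ← abs_mul, ← abs_mul]
        exact (abs_sub _ _).trans (add_le_add_left (abs_sub _ _) _)
    _ ≤ B * |x' t| + M * (Real.exp B + 1) + M * (Real.exp B + 1) := by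
        gcongr
        · exact (abs_nonneg _).trans hwp
        · exact hexp s hs
        · exact (abs_nonneg _).trans hwm
        · exact hexp (-s) (by rwa [abs_neg])
    _ = B * |x' t| + 2 * M * (Real.exp B + 1) := by ring

theorem tendsto_integral_rateIntegrand [MeasurableSpace α] {μ : Measure α} [IsFiniteMeasure μ]
    {M B : ℝ} (hx' : Integrable x' μ) (hwpm : AEStronglyMeasurable wp μ)
    (hwmm : AEStronglyMeasurable wm μ) (hwp : ∀ᵐ t ∂μ, |wp t| ≤ M)
    (hwm : ∀ᵐ t ∂μ, |wm t| ≤ M)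
    {a : ℕ → α → ℝ} {b : α → ℝ} (ha : ∀ n, AEStronglyMeasurable (a n) μ)
    (haB : ∀ n, ∀ᵐ t ∂μ, |a n t| ≤ B)
    (hab : ∀ᵐ t ∂μ, Tendsto (fun n => a n t) atTop (𝓝 (b t))) :
    Tendsto (fun n => ∫ t, rateIntegrand x' wp wm (a n t) t ∂μ) atTop
      (𝓝 (∫ t, rateIntegrand x' wp wm (b t) t ∂μ)) := by
  refine tendsto_integral_of_dominated_convergence
    (fun t => B * |x' t| + 2 * M * (Real.exp B + 1)) (fun n => ?_)
    ((hx'.abs.const_mul B).add (integrable_const _)) (fun n => ?_) ?_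
  · unfold rateIntegrand
    have han := ha n
    fun_prop
  · filter_upwards [haB n, hwp, hwm] with t hat hwpt hwmt
    exact abs_rateIntegrand_le hat hwpt hwmt
  · filter_upwards [hab] with t ht
    exact ((continuous_rateIntegrand t).tendsto _).comp ht

end

theorem sup_C1_eq_sup_bounded_measurable_general (T M : ℝ)
    (x' : ℝ → ℝ) (hx'int : IntegrableOn x' (Set.Ioc 0 T))
    (wp wm : ℝ → ℝ) (hwpmeas : Measurable wp) (hwmmeas : Measurable wm)
    (hwp : ∀ t, wp t ∈ Set.Icc (0 : ℝ) M) (hwm : ∀ t, wm t ∈ Set.Icc (0 : ℝ) M) :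
    sSup {v : EReal | ∃ a : ℝ → ℝ, ContDiff ℝ 1 a ∧
        v = ((Frate T x' wp wm a : ℝ) : EReal)} =
      sSup {v : EReal | ∃ a : ℝ → ℝ, Measurable a ∧ (∃ K : ℝ, ∀ t, |a t| ≤ K) ∧
        v = ((Frate T x' wp wm a : ℝ) : EReal)} := by
  apply le_antisymm
  · refine sSup_le_sSup ?_
    rintro _ ⟨a, ha, rfl⟩
    obtain ⟨C, hC⟩ := isCompact_Icc.exists_bound_of_continuousOn (s := Set.Icc 0 T)
      ha.continuous.continuousOn
    refine ⟨(Set.Icc 0 T).indicator a, ha.continuous.measurable.indicator measurableSet_Icc,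
      ⟨max C 0, fun t => ?_⟩, ?_⟩
    · by_cases ht : t ∈ Set.Icc 0 T
      · simpa [ht] using (hC t ht).trans (le_max_left C 0)
      · simp [ht]
    · refine congrArg _ (setIntegral_congr_fun measurableSet_Ioc fun t ht => ?_)
      simp [Set.indicator_of_mem (Set.Ioc_subset_Icc_self ht)]
  · refine sSup_le ?_
    rintro _ ⟨a, ha, ⟨K, hK⟩, rfl⟩
    obtain ⟨g, hg, hgK, hga⟩ :=
      exists_seq_contDiff_tendsto_ae_of_norm_le (μ := volume) ha.aestronglyMeasurable hK
    have hlim : Tendsto (fun n => Frate T x' wp wm (g n)) atTop (𝓝 (Frate T x' wp wm a)) :=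
      tendsto_integral_rateIntegrand hx'int hwpmeas.aestronglyMeasurable
        hwmmeas.aestronglyMeasurable
        (ae_of_all _ fun t => (abs_of_nonneg (hwp t).1).trans_le (hwp t).2)
        (ae_of_all _ fun t => (abs_of_nonneg (hwm t).1).trans_le (hwm t).2)
        (fun n => (hg n).continuous.aestronglyMeasurable) (fun n => ae_of_all _ (hgK n))
        (ae_restrict_of_ae hga)
    exact le_of_tendsto' ((continuous_coe_real_ereal.tendsto _).comp hlim) fun n =>
      le_sSup ⟨g n, (hg n).of_le (by exact_mod_cast le_top), rfl⟩

/-- The supremum over `C¹` perturbations equals the supremum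
over bounded measurable perturbations in the random-walk rate function. -/
theorem sup_C1_eq_sup_bounded_measurable (T M : ℝ) (hT : 0 < T) (hM : 0 < M)
    (x x' : ℝ → ℝ) (hx'meas : Measurable x') (hx'int : IntegrableOn x' (Set.Ioc 0 T))
    (hAC : ∀ t ∈ Set.Icc 0 T, x t = x 0 + ∫ s in (0 : ℝ)..t, x' s)
    (wp wm : ℝ → ℝ) (hwpmeas : Measurable wp) (hwmmeas : Measurable wm)
    (hwp : ∀ t, wp t ∈ Set.Icc (0 : ℝ) M) (hwm : ∀ t, wm t ∈ Set.Icc (0 : ℝ) M) :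
    sSup {v : EReal | ∃ a : ℝ → ℝ, ContDiff ℝ 1 a ∧
        v = ((Frate T x' wp wm a : ℝ) : EReal)} =
      sSup {v : EReal | ∃ a : ℝ → ℝ, Measurable a ∧ (∃ K : ℝ, ∀ t, |a t| ≤ K) ∧
        v = ((Frate T x' wp wm a : ℝ) : EReal)} :=
  sup_C1_eq_sup_bounded_measurable_general T M x' hx'int wp wm hwpmeas hwmmeas hwp hwm

end
end

section
/- Two-point estimate. For any x, y ∈ ℤ/nℤ, any β > 0, and any g: Ω_n → ℝ with ∫ g² dν_ρ = 1, one has ∫ (η(x) − η(y)) g(η)² dν_ρ(η) ≤ (1/(2β)) · D^{x,y}(g) + 2β. -/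
noncomputable section

/-- Expectation with respect to the product Bernoulli(ρ) measure `ν_ρ` on
configurations `Ω_n = {0,1}^{ℤ/nℤ}`. -/
def nuExp (n : ℕ) [NeZero n] (ρ : ℝ) (φ : (ZMod n → Bool) → ℝ) : ℝ :=
  ∑ η : ZMod n → Bool, (∏ x : ZMod n, (if η x then ρ else 1 - ρ)) * φ η

/-- The configuration `η^{x,y}`, obtained from `η` by exchanging the values at `x` and `y`. -/
def swapConf {n : ℕ} (η : ZMod n → Bool) (x y : ZMod n) : ZMod n → Bool :=
  fun z => if z = x then η y else if z = y then η x else η z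

/-- The elementary Dirichlet form `D^{x,y}(g) = (1/2)∫ (g(η^{x,y}) − g(η))² dν_ρ`. -/
def Dxy (n : ℕ) [NeZero n] (ρ : ℝ) (x y : ZMod n) (g : (ZMod n → Bool) → ℝ) : ℝ :=
  (1 / 2) * nuExp n ρ (fun η => (g (swapConf η x y) - g η) ^ 2)

lemma swapConf_eq_comp {n : ℕ} (η : ZMod n → Bool) (x y : ZMod n) (z : ZMod n) :
    swapConf η x y z = η (Equiv.swap x y z) := by
  by_cases h1 : z = x
  · simp [swapConf, Equiv.swap_apply_def, h1]
  · by_cases h2 : z = y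
    · subst h2
      simp only [swapConf, Equiv.swap_apply_def, if_neg h1, if_pos rfl]
      simp
    · simp [swapConf, Equiv.swap_apply_def, h1, h2]

lemma swapConf_invol {n : ℕ} (η : ZMod n → Bool) (x y : ZMod n) :
    swapConf (swapConf η x y) x y = η := by
  funext z
  simp only [swapConf_eq_comp]
  rw [Equiv.swap_apply_self]

lemma weight_swap (n : ℕ) [NeZero n] (ρ : ℝ) (η : ZMod n → Bool) (x y : ZMod n) :
    (∏ z : ZMod n, (if swapConf η x y z then ρ else 1 - ρ))
      = ∏ z : ZMod n, (if η z then ρ else 1 - ρ) := by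
  simp only [swapConf_eq_comp]
  exact Equiv.prod_comp (Equiv.swap x y) (fun z => if η z then ρ else 1 - ρ)

lemma nuExp_swap (n : ℕ) [NeZero n] (ρ : ℝ) (x y : ZMod n)
    (φ : (ZMod n → Bool) → ℝ) :
    nuExp n ρ (fun η => φ (swapConf η x y)) = nuExp n ρ φ := by
  unfold nuExp
  refine Fintype.sum_equiv
    ⟨fun η => swapConf η x y, fun η => swapConf η x y,
      fun η => swapConf_invol η x y, fun η => swapConf_invol η x y⟩ _ _ ?_
  intro η
  simp only [Equiv.coe_fn_mk]
  rw [weight_swap]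

lemma nuExp_add (n : ℕ) [NeZero n] (ρ : ℝ) (φ ψ : (ZMod n → Bool) → ℝ) :
    nuExp n ρ (fun η => φ η + ψ η) = nuExp n ρ φ + nuExp n ρ ψ := by
  unfold nuExp
  rw [← Finset.sum_add_distrib]
  exact Finset.sum_congr rfl fun η _ => by ring

lemma nuExp_const_mul (n : ℕ) [NeZero n] (ρ : ℝ) (c : ℝ)
    (φ : (ZMod n → Bool) → ℝ) :
    nuExp n ρ (fun η => c * φ η) = c * nuExp n ρ φ := by
  unfold nuExp
  rw [Finset.mul_sum]
  exact Finset.sum_congr rfl fun η _ => by ring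

lemma weight_nonneg (n : ℕ) [NeZero n] {ρ : ℝ} (hρ0 : 0 < ρ) (hρ1 : ρ < 1)
    (η : ZMod n → Bool) :
    0 ≤ ∏ z : ZMod n, (if η z then ρ else 1 - ρ) := by
  apply Finset.prod_nonneg
  intro z _
  split <;> linarith

lemma nuExp_mono (n : ℕ) [NeZero n] {ρ : ℝ} (hρ0 : 0 < ρ) (hρ1 : ρ < 1)
    {φ ψ : (ZMod n → Bool) → ℝ} (h : ∀ η, φ η ≤ ψ η) :
    nuExp n ρ φ ≤ nuExp n ρ ψ := by
  apply Finset.sum_le_sum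
  intro η _
  exact mul_le_mul_of_nonneg_left (h η) (weight_nonneg n hρ0 hρ1 η)

lemma nuExp_nonneg (n : ℕ) [NeZero n] {ρ : ℝ} (hρ0 : 0 < ρ) (hρ1 : ρ < 1)
    {φ : (ZMod n → Bool) → ℝ} (h : ∀ η, 0 ≤ φ η) :
    0 ≤ nuExp n ρ φ := by
  have := nuExp_mono n hρ0 hρ1 (φ := fun _ => 0) (ψ := φ) h
  simpa [nuExp] using this

/-- **Two-point estimate.** For any `x, y ∈ ℤ/nℤ`, any `β > 0`
and any `g` with `∫ g² dν_ρ = 1`,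
`∫ (η(x) − η(y)) g(η)² dν_ρ ≤ (1/(2β)) D^{x,y}(g) + 2β`. -/
theorem two_point_estimate (n : ℕ) [NeZero n] (hn : 3 ≤ n)
    (ρ : ℝ) (hρ0 : 0 < ρ) (hρ1 : ρ < 1) (x y : ZMod n) (β : ℝ) (hβ : 0 < β)
    (g : (ZMod n → Bool) → ℝ) (hg : nuExp n ρ (fun η => (g η) ^ 2) = 1) :
    nuExp n ρ (fun η =>
        ((if η x then (1 : ℝ) else 0) - (if η y then (1 : ℝ) else 0)) * (g η) ^ 2)
      ≤ (1 / (2 * β)) * Dxy n ρ x y g + 2 * β := by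
  set a : (ZMod n → Bool) → ℝ :=
    fun η => (if η x then (1 : ℝ) else 0) - (if η y then (1 : ℝ) else 0) with ha
  set S : (ZMod n → Bool) → (ZMod n → Bool) := fun η => swapConf η x y with hS
  have haS : ∀ η, a (S η) = - a η := by
    intro η
    have hx : S η x = η y := by simp [hS, swapConf]
    have hy : S η y = η x := by
      by_cases h : y = x
      · simp [hS, swapConf, h]
      · simp [hS, swapConf, h]
    simp only [ha, hx, hy]; ring
  -- LHS via swap invariance
  have hinv : nuExp n ρ (fun η => a (S η) * (g (S η)) ^ 2)
      = nuExp n ρ (fun η => a η * (g η) ^ 2) :=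
    nuExp_swap n ρ x y (fun η => a η * (g η) ^ 2)
  have hgS : nuExp n ρ (fun η => (g (S η)) ^ 2) = 1 := by
    rw [hS]
    rw [nuExp_swap n ρ x y (fun η => (g η) ^ 2)]
    exact hg
  set L := nuExp n ρ (fun η => a η * (g η) ^ 2) with hL
  have h2L : 2 * L = nuExp n ρ
      (fun η => a η * (g η) ^ 2 + (- a η) * (g (S η)) ^ 2) := by
    rw [nuExp_add]
    have : nuExp n ρ (fun η => (- a η) * (g (S η)) ^ 2)
        = nuExp n ρ (fun η => a (S η) * (g (S η)) ^ 2) := by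
      congr 1; funext η; rw [haS]
    rw [this, hinv]; ring
  -- pointwise bound
  have hpt : ∀ η, a η * (g η) ^ 2 + (- a η) * (g (S η)) ^ 2
      ≤ (1 / (4 * β)) * (g (S η) - g η) ^ 2
        + (2 * β) * (g η) ^ 2 + (2 * β) * (g (S η)) ^ 2 := by
    intro η
    set p := g η; set q := g (S η)
    have hβ' : (0 : ℝ) < 4 * β := by linarith
    have amgm : ∀ s t : ℝ, s * t ≤ 1 / (4 * β) * s ^ 2 + β * t ^ 2 := by
      intro s t
      have hid : 1 / (4 * β) * s ^ 2 + β * t ^ 2 - s * t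
          = (1 / (4 * β)) * (s - 2 * β * t) ^ 2 := by
        field_simp; ring
      nlinarith [mul_nonneg (le_of_lt (by positivity : (0:ℝ) < 1 / (4 * β)))
        (sq_nonneg (s - 2 * β * t))]
    have hsum : β * (p + q) ^ 2 ≤ 2 * β * p ^ 2 + 2 * β * q ^ 2 := by
      nlinarith [mul_nonneg hβ.le (sq_nonneg (p - q))]
    have key : ∀ (c : ℝ), c = 1 ∨ c = -1 ∨ c = 0 →
        c * p ^ 2 + (-c) * q ^ 2
          ≤ (1 / (4 * β)) * (q - p) ^ 2 + (2 * β) * p ^ 2 + (2 * β) * q ^ 2 := by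
      intro c hc
      rcases hc with h | h | h <;> subst h
      · have := amgm (p - q) (p + q)
        have hsq : (p - q) ^ 2 = (q - p) ^ 2 := by ring
        rw [hsq] at this
        nlinarith
      · have := amgm (q - p) (q + p)
        nlinarith
      · have h1 : 0 ≤ (1 / (4 * β)) * (q - p) ^ 2 :=
          mul_nonneg (by positivity) (sq_nonneg _)
        nlinarith [sq_nonneg p, sq_nonneg q]
    apply key
    simp only [ha]
    by_cases h1 : η x <;> by_cases h2 : η y <;> simp [h1, h2]
  have hmono := nuExp_mono n hρ0 hρ1 hpt
  rw [← h2L] at hmono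
  have hRHS : nuExp n ρ (fun η => (1 / (4 * β)) * (g (S η) - g η) ^ 2
        + (2 * β) * (g η) ^ 2 + (2 * β) * (g (S η)) ^ 2)
      = (1 / (4 * β)) * nuExp n ρ (fun η => (g (S η) - g η) ^ 2) + 4 * β := by
    rw [nuExp_add, nuExp_add, nuExp_const_mul, nuExp_const_mul, nuExp_const_mul,
      hg, hgS]
    ring
  rw [hRHS] at hmono
  have hDnn : 0 ≤ Dxy n ρ x y g := by
    unfold Dxy
    have := nuExp_nonneg n hρ0 hρ1
      (φ := fun η => (g (swapConf η x y) - g η) ^ 2) (fun η => sq_nonneg _)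
    linarith
  have hDval : nuExp n ρ (fun η => (g (S η) - g η) ^ 2) = 2 * Dxy n ρ x y g := by
    unfold Dxy; rw [hS]; ring
  rw [hDval] at hmono
  have h4 : (1 / (4 * β)) * (2 * Dxy n ρ x y g) = (1 / (2 * β)) * Dxy n ρ x y g := by
    field_simp; ring
  rw [h4] at hmono
  have hnn : 0 ≤ 1 / (2 * β) * Dxy n ρ x y g := mul_nonneg (by positivity) hDnn
  linarith

end
end
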